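/- For each d ≥ 2, the Catalan number λ(d) = (1/d)·C(2d−2, d−1) and the central binomial coefficient λ'(d) = C(d−1, ⌈(d−1)/2⌉) are congruent modulo 2. -/
import Mathlib

open Finset

private lemma zmod2_add_self : ∀ x : ZMod 2, x + x = 0 := by decide
private lemma zmod2_mul_self : ∀ x : ZMod 2, x * x = x := by decide

/-- Symmetric sum over an odd number of terms in `ZMod 2` equals the middle term. -/
private lemma sum_sym_odd (m : ℕ) (g : ℕ → ZMod 2)
    (hsym : ∀ i ≤ 2 * m, g i = g (2 * m - i)) :
    ∑ i ∈ Finset.range (2 * m + 1), g i = g m := by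
  have hm : m ∈ Finset.range (2 * m + 1) := by simp; omega
  rw [← Finset.sum_erase_add _ _ hm]
  have h0 : ∑ i ∈ (Finset.range (2 * m + 1)).erase m, g i = 0 := by
    apply Finset.sum_involution (fun a _ => 2 * m - a)
    · intro a ha
      simp only [Finset.mem_erase, Finset.mem_range] at ha
      rw [← hsym a (by omega)]
      exact zmod2_add_self _
    · intro a ha _
      simp only [Finset.mem_erase, Finset.mem_range] at ha
      omega
    · intro a ha
      simp only [Finset.mem_erase, Finset.mem_range] at ha ⊢
      omega
    · intro a ha
      simp only [Finset.mem_erase, Finset.mem_range] at ha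
      omega
  rw [h0, zero_add]

/-- Symmetric sum over an even number of terms in `ZMod 2` vanishes. -/
private lemma sum_sym_even (m : ℕ) (g : ℕ → ZMod 2)
    (hsym : ∀ i ≤ 2 * m + 1, g i = g (2 * m + 1 - i)) :
    ∑ i ∈ Finset.range (2 * m + 2), g i = 0 := by
  apply Finset.sum_involution (fun a _ => 2 * m + 1 - a)
  · intro a ha
    simp only [Finset.mem_range] at ha
    rw [← hsym a (by omega)]
    exact zmod2_add_self _
  · intro a ha _
    simp only [Finset.mem_range] at ha
    omega
  · intro a ha
    simp only [Finset.mem_range] at ha ⊢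
    omega
  · intro a ha
    simp only [Finset.mem_range] at ha
    omega

private lemma catalan_mod_two (n : ℕ) :
    ((catalan n : ZMod 2)) = ((n.choose ((n + 1) / 2) : ℕ) : ZMod 2) := by
  haveI : Fact (Nat.Prime 2) := ⟨Nat.prime_two⟩
  induction n using Nat.strong_induction_on with
  | _ n ih =>
    obtain ⟨m, rfl | rfl⟩ := Nat.even_or_odd' n
    · -- n = 2 * m
      rcases m with _ | k
      · simp [catalan_zero]
      · -- n = 2 * (k + 1) = (2 * k + 1) + 1
        have hn : 2 * (k + 1) = (2 * k + 1) + 1 := by ring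
        rw [hn, catalan_succ]
        push_cast
        rw [Fin.sum_univ_eq_sum_range
          (fun i => ((catalan i : ZMod 2)) * ((catalan (2 * k + 1 - i) : ZMod 2)))]
        have hL : ∑ i ∈ Finset.range (2 * k + 2),
            ((catalan i : ZMod 2)) * ((catalan (2 * k + 1 - i) : ZMod 2)) = 0 := by
          apply sum_sym_even k
          intro i hi
          have h : 2 * k + 1 - (2 * k + 1 - i) = i := by omega
          rw [h, mul_comm]
        rw [hL]
        have hhalf : ((2 * k + 1) + 1 + 1) / 2 = k + 1 := by omega
        rw [hhalf]
        have hcb : ((2 * k + 1 + 1).choose (k + 1)) = Nat.centralBinom (k + 1) := by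
          rw [Nat.centralBinom_eq_two_mul_choose, show 2 * (k + 1) = 2 * k + 1 + 1 by ring]
        rw [hcb]
        symm
        rw [ZMod.natCast_eq_zero_iff]
        exact Nat.two_dvd_centralBinom_succ k
    · -- n = 2 * m + 1
      rw [catalan_succ]
      push_cast
      rw [Fin.sum_univ_eq_sum_range
        (fun i => ((catalan i : ZMod 2)) * ((catalan (2 * m - i) : ZMod 2)))]
      have hL : ∑ i ∈ Finset.range (2 * m + 1),
          ((catalan i : ZMod 2)) * ((catalan (2 * m - i) : ZMod 2))
          = (catalan m : ZMod 2) := by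
        have hs : ∀ i, i ≤ 2 * m →
            ((catalan i : ZMod 2)) * ((catalan (2 * m - i) : ZMod 2))
              = ((catalan (2 * m - i) : ZMod 2)) * ((catalan (2 * m - (2 * m - i)) : ZMod 2)) := by
          intro i hi
          rw [Nat.sub_sub_self hi, mul_comm]
        rw [sum_sym_odd m (fun i => ((catalan i : ZMod 2)) * ((catalan (2 * m - i) : ZMod 2))) hs]
        simp only [Nat.two_mul, Nat.add_sub_cancel, zmod2_mul_self]
      rw [hL]
      -- Lucas's theorem for `(2m+1).choose (m+1)` mod 2
      have lucas := Choose.choose_modEq_choose_mod_mul_choose_div_nat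
        (p := 2) (n := 2 * m + 1) (k := m + 1)
      have h1 : (2 * m + 1) % 2 = 1 := by omega
      have h2 : (2 * m + 1) / 2 = m := by omega
      rw [h1, h2] at lucas
      have h3 : Nat.choose 1 ((m + 1) % 2) = 1 := by
        rcases Nat.mod_two_eq_zero_or_one (m + 1) with h | h <;> simp [h]
      rw [h3, one_mul] at lucas
      have lucas' : (((2 * m + 1).choose (m + 1) : ℕ) : ZMod 2)
          = ((m.choose ((m + 1) / 2) : ℕ) : ZMod 2) :=
        (ZMod.natCast_eq_natCast_iff _ _ _).mpr lucas
      have hhalf : (2 * m + 1 + 1) / 2 = m + 1 := by omega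
      rw [hhalf, lucas']
      exact ih m (by omega)

private lemma ceil_half (n : ℕ) : ⌈((n : ℚ)) / 2⌉₊ = (n + 1) / 2 := by
  obtain ⟨k, rfl | rfl⟩ := Nat.even_or_odd' n
  · have : ((2 * k : ℕ) : ℚ) / 2 = (k : ℚ) := by push_cast; ring
    rw [this, Nat.ceil_natCast]
    omega
  · have hv : ((2 * k + 1 : ℕ) : ℚ) / 2 = (k : ℚ) + 1 / 2 := by push_cast; ring
    rw [hv]
    have : ⌈(k : ℚ) + 1 / 2⌉₊ = k + 1 := by
      rw [Nat.ceil_eq_iff (by omega)]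
      constructor
      · push_cast
        norm_num
      · push_cast
        norm_num
    rw [this]
    omega

/-- For `d ≥ 2`, the Catalan number `λ(d) = (1/d)·C(2d-2, d-1)` and the central
binomial coefficient `λ'(d) = C(d-1, ⌈(d-1)/2⌉)` are congruent modulo 2. -/
theorem stmt_7 (d : ℕ) (hd : 2 ≤ d) :
    ((2 * d - 2).choose (d - 1) / d) % 2
      = ((d - 1).choose ⌈((d : ℚ) - 1) / 2⌉₊) % 2 := by
  have hcast : ((d : ℚ) - 1) = ((d - 1 : ℕ) : ℚ) := by
    have : (1 : ℚ) ≤ (d : ℚ) := by exact_mod_cast Nat.one_le_of_lt hd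
    push_cast [Nat.cast_sub (by omega : 1 ≤ d)]
    ring
  rw [hcast, ceil_half]
  have hcat : (2 * d - 2).choose (d - 1) / d = catalan (d - 1) := by
    rw [catalan_eq_centralBinom_div, Nat.centralBinom_eq_two_mul_choose]
    have h1 : 2 * (d - 1) = 2 * d - 2 := by omega
    have h2 : d - 1 + 1 = d := by omega
    rw [h1, h2]
  rw [hcat]
  have := (ZMod.natCast_eq_natCast_iff _ _ 2).mp (catalan_mod_two (d - 1))
  exact this
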